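/- Let n ≥ 3 and let 𝔪 be the Lie subalgebra of the Clifford algebra C(ℝ^n, q) generated by v_1v_2v_3 and by the elements v_i v_{i+1} for 1 ≤ i < n. Then 𝔪 contains every product v_{j_1} v_{j_2} ⋯ v_{j_k} with pairwise distinct indices j_t ∈ {1,…,n} and 2 ≤ k ≤ n with k ≡ 2 or 3 (mod 4), with the possible exception of v_1 v_2 ⋯ v_n, and this exception can only occur when n ≡ 3 (mod 4). -/

import Mathlib

open QuadraticMap CliffordAlgebra

attribute [local instance 100] LieRing.ofAssociativeRing

/-- The standard positive definite quadratic form `q = x₁² + ⋯ + xₙ²` on `ℝⁿ`. -/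
noncomputable def stdForm (n : ℕ) : QuadraticForm ℝ (Fin n → ℝ) :=
  QuadraticMap.weightedSumSquares ℝ (fun _ : Fin n => (1 : ℝ))

/-- The images `v i` of the standard basis vectors in the Clifford algebra `C(ℝⁿ, q)`. -/
noncomputable def cliffordGen (n : ℕ) (i : Fin n) : CliffordAlgebra (stdForm n) :=
  CliffordAlgebra.ι (stdForm n) (Pi.single i 1)

/-- The Lie subalgebra `𝔪` of `C(ℝⁿ, q)` generated by `v₁v₂v₃` and the `vᵢvᵢ₊₁`. -/
noncomputable def lieM (n : ℕ) (hn : 3 ≤ n) : LieSubalgebra ℝ (CliffordAlgebra (stdForm n)) :=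
  LieSubalgebra.lieSpan ℝ _
    (insert (cliffordGen n ⟨0, by omega⟩ * cliffordGen n ⟨1, by omega⟩ *
        cliffordGen n ⟨2, by omega⟩)
      {x | ∃ i : ℕ, ∃ h : i + 1 < n,
        x = cliffordGen n ⟨i, by omega⟩ * cliffordGen n ⟨i + 1, h⟩})

/-!
Write `v_l` for the product of the generators along a list `l` of distinct indices. Products
over disjoint index sets commute up to the sign `(-1)^(|l₁| |l₂|)`, so for disjoint `l₁, l₂` of
odd length `⁅v_{l₁}, v_{l₂}⁆ = 2 v_{l₁ ++ l₂}`, and a shared index cancels: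
`⁅v_X v_d, v_d v_T⁆ = 2 v_X v_T` as soon as `|X|` or `|T|` is odd. Chaining neighbours gives
every `v_a v_b`; bracketing with these replaces an index of a product by any unused one, so all
triple products lie in `𝔪` along with `v₁v₂v₃`. Then induct on the length `k`: for `k ≡ 2 (mod 4)`
bracket a triple with a disjoint product of length `k - 3 ≡ 3`; for `k ≡ 3` bracket `v_x v_y v_d`
with `v_d v_T` of length `k - 1 ≡ 2`, which needs an index `d` outside the product, i.e. `k < n`.
-/

theorem Finset.of_card_eq_of_exchange {α : Type*} [DecidableEq α] {P : Finset α → Prop}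
    (exchange : ∀ s x y, P s → x ∈ s → y ∉ s → P (insert y (s.erase x)))
    {s t : Finset α} (hs : P s) (hcard : s.card = t.card) : P t := by
  induction hd : (t \ s).card generalizing s with
  | zero =>
    have hts : t ⊆ s := Finset.sdiff_eq_empty_iff_subset.mp (Finset.card_eq_zero.mp hd)
    exact Finset.eq_of_subset_of_card_le hts hcard.le ▸ hs
  | succ d ih =>
    obtain ⟨y, hy⟩ : (t \ s).Nonempty := Finset.card_pos.mp (by omega)
    obtain ⟨x, hx⟩ : (s \ t).Nonempty := by
      rw [← Finset.card_pos, Finset.card_sdiff_comm hcard]; omega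
    rw [Finset.mem_sdiff] at hx hy
    have hsdiff : t \ insert y (s.erase x) = (t \ s).erase y := by
      ext z; simp only [Finset.mem_sdiff, Finset.mem_insert, Finset.mem_erase]; grind
    refine ih (exchange s x y hs hx.1 hy.2) ?_ ?_
    · rw [Finset.card_insert_of_notMem (by simp [hy.2]), Finset.card_erase_add_one hx.1, hcard]
    · rw [hsdiff, Finset.card_erase_of_mem (Finset.mem_sdiff.mpr hy), hd, Nat.add_sub_cancel]

theorem cliffordGen_mul_self {n : ℕ} (i : Fin n) : cliffordGen n i * cliffordGen n i = 1 := by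
  rw [cliffordGen, ι_sq_scalar, stdForm, weightedSumSquares_apply]
  simp [Pi.single_apply]

theorem cliffordGen_mul_anticomm {n : ℕ} {i j : Fin n} (h : i ≠ j) :
    cliffordGen n i * cliffordGen n j = -(cliffordGen n j * cliffordGen n i) := by
  have hpolar : polar (stdForm n) (Pi.single i 1) (Pi.single j 1) = 0 := by
    simp only [polar, stdForm, weightedSumSquares_apply, smul_eq_mul, one_mul, Pi.add_apply,
      ← Finset.sum_sub_distrib]
    refine Finset.sum_eq_zero fun t _ => ?_
    rcases eq_or_ne t i with rfl | hi <;> rcases eq_or_ne t j with rfl | hj <;>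
      simp_all
  have := ι_mul_ι_add_swap (Q := stdForm n) (Pi.single i 1) (Pi.single j 1)
  rw [hpolar, map_zero] at this
  exact eq_neg_of_add_eq_zero_left this

noncomputable def blade (n : ℕ) (l : List (Fin n)) : CliffordAlgebra (stdForm n) :=
  (l.map (cliffordGen n)).prod

section Blade

variable {n : ℕ}

@[simp]
theorem blade_nil : blade n [] = 1 := rfl

@[simp]
theorem blade_cons (a : Fin n) (l : List (Fin n)) :
    blade n (a :: l) = cliffordGen n a * blade n l := by
  simp [blade]

@[simp]
theorem blade_singleton (a : Fin n) : blade n [a] = cliffordGen n a := by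
  simp [blade]

@[simp]
theorem blade_append (l₁ l₂ : List (Fin n)) :
    blade n (l₁ ++ l₂) = blade n l₁ * blade n l₂ := by
  simp [blade]

theorem blade_mul_cliffordGen {a : Fin n} {l : List (Fin n)} (ha : a ∉ l) :
    blade n l * cliffordGen n a = (-1 : ℝ) ^ l.length • (cliffordGen n a * blade n l) := by
  induction l with
  | nil => simp
  | cons x t ih =>
    rw [List.mem_cons, not_or] at ha
    rw [blade_cons, mul_assoc, ih ha.2, mul_smul_comm, ← mul_assoc,
      cliffordGen_mul_anticomm (Ne.symm ha.1), List.length_cons, pow_succ, mul_smul,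
      neg_one_smul, neg_mul, mul_assoc]

theorem blade_mul_blade_comm {l₁ l₂ : List (Fin n)} (h : List.Disjoint l₁ l₂) :
    blade n l₂ * blade n l₁ = (-1 : ℝ) ^ (l₁.length * l₂.length) • (blade n l₁ * blade n l₂) := by
  induction l₁ with
  | nil => simp
  | cons a t ih =>
    rw [List.disjoint_cons_left] at h
    rw [blade_cons, ← mul_assoc, blade_mul_cliffordGen h.1, smul_mul_assoc, mul_assoc,
      ih h.2, mul_smul_comm, smul_smul, ← pow_add, ← mul_assoc, List.length_cons]
    ring_nf

theorem blade_eq_or_eq_neg_of_perm {l l' : List (Fin n)} (h : l.Perm l') (hl : l.Nodup) :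
    blade n l = blade n l' ∨ blade n l = -blade n l' := by
  induction h with
  | nil => exact Or.inl rfl
  | cons x _ ih =>
    rcases ih hl.of_cons with h' | h'
    · exact Or.inl (by rw [blade_cons, blade_cons, h'])
    · exact Or.inr (by rw [blade_cons, blade_cons, h', mul_neg])
  | swap x y l =>
    have hxy : y ≠ x := fun e => (List.nodup_cons.mp hl).1 (e ▸ List.mem_cons_self)
    right
    simp only [blade_cons, ← mul_assoc, cliffordGen_mul_anticomm hxy, neg_mul]
  | trans h₁ _ ih₁ ih₂ =>
    rcases ih₁ hl with h' | h' <;> rcases ih₂ (h₁.nodup_iff.mp hl) with h'' | h'' <;>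
      simp [h', h'']

theorem lie_blade_of_disjoint_of_odd {l₁ l₂ : List (Fin n)} (h : List.Disjoint l₁ l₂)
    (h₁ : Odd l₁.length) (h₂ : Odd l₂.length) :
    ⁅blade n l₁, blade n l₂⁆ = (2 : ℝ) • blade n (l₁ ++ l₂) := by
  rw [Ring.lie_def, blade_mul_blade_comm h, (h₁.mul h₂).neg_one_pow, neg_one_smul,
    sub_neg_eq_add, blade_append, two_smul]

theorem lie_blade_append_singleton_blade_cons {X T : List (Fin n)} {d : Fin n}
    (hX : d ∉ X) (hT : d ∉ T) (hXT : List.Disjoint X T) (hodd : Odd X.length ∨ Odd T.length) :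
    ⁅blade n (X ++ [d]), blade n (d :: T)⁆ = (2 : ℝ) • blade n (X ++ T) := by
  have hsign : (-1 : ℝ) ^ (X.length * (T.length + 1) + T.length) = -1 := by
    refine Odd.neg_one_pow ?_
    rcases hodd with h | h <;> simp [Nat.odd_add, Nat.odd_mul, h, parity_simps]
  have hXdT : List.Disjoint X (d :: T) := List.disjoint_cons_right.mpr ⟨hX, hXT⟩
  have hleft : blade n (X ++ [d]) * blade n (d :: T) = blade n (X ++ T) := by
    rw [blade_append, blade_singleton, blade_cons, mul_assoc, ← mul_assoc (cliffordGen n d),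
      cliffordGen_mul_self, one_mul, blade_append]
  have hright : blade n (d :: T) * blade n (X ++ [d]) = -blade n (X ++ T) := by
    rw [blade_append, ← mul_assoc, blade_mul_blade_comm hXdT, List.length_cons, smul_mul_assoc,
      blade_cons, blade_singleton, mul_assoc, mul_assoc, blade_mul_cliffordGen hT, mul_smul_comm,
      mul_smul_comm, smul_smul, ← pow_add, hsign, ← mul_assoc (cliffordGen n d),
      cliffordGen_mul_self, one_mul, neg_one_smul, blade_append]
  rw [Ring.lie_def, hleft, hright, sub_neg_eq_add, two_smul]

end Blade

theorem LieSubalgebra.mem_of_lie_eq_two_smul {R L : Type*} [Field R] [NeZero (2 : R)] [LieRing L]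
    [LieAlgebra R L] (K : LieSubalgebra R L) {x y z : L} (hx : x ∈ K) (hy : y ∈ K)
    (h : ⁅x, y⁆ = (2 : R) • z) : z ∈ K := by
  have := K.smul_mem (2 : R)⁻¹ (h ▸ K.lie_mem hx hy)
  rwa [smul_smul, inv_mul_cancel₀ two_ne_zero, one_smul] at this

section Subalgebra

variable {n : ℕ} (K : LieSubalgebra ℝ (CliffordAlgebra (stdForm n)))

theorem blade_mem_iff_of_perm {l l' : List (Fin n)} (h : l.Perm l') (hl : l.Nodup) :
    blade n l ∈ K ↔ blade n l' ∈ K := by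
  rcases blade_eq_or_eq_neg_of_perm h hl with h' | h' <;> simp [h']

theorem blade_mem_iff_of_toFinset_eq {l : List (Fin n)} {s : Finset (Fin n)} (hl : l.Nodup)
    (hs : l.toFinset = s) : blade n l ∈ K ↔ blade n s.toList ∈ K :=
  blade_mem_iff_of_perm K (hs ▸ List.toFinset_toList hl).symm hl

variable {K}

theorem blade_cons_cons_mem_of_triple_mem {x y d : Fin n} {T : List (Fin n)}
    (hl : (x :: y :: T).Nodup) (hd : d ∉ x :: y :: T) (hT : Odd T.length)
    (h₁ : blade n [x, y, d] ∈ K) (h₂ : blade n (d :: T) ∈ K) : blade n (x :: y :: T) ∈ K := by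
  simp only [List.nodup_cons, List.mem_cons, not_or] at hl hd
  obtain ⟨⟨-, hxT⟩, hyT, -⟩ := hl
  obtain ⟨hdx, hdy, hdT⟩ := hd
  exact K.mem_of_lie_eq_two_smul (x := blade n ([x, y] ++ [d])) h₁ h₂
    (lie_blade_append_singleton_blade_cons (by simp [hdx, hdy]) hdT
      (by simp [List.disjoint_cons_left, hxT, hyT]) (Or.inr hT))

variable (hpair : ∀ a b : Fin n, a ≠ b → blade n [a, b] ∈ K)
include hpair

theorem blade_cons_mem_of_blade_cons_mem {x y : Fin n} {t : List (Fin n)} (hx : x ∉ t)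
    (hy : y ∉ t) (h : blade n (x :: t) ∈ K) : blade n (y :: t) ∈ K := by
  rcases eq_or_ne y x with rfl | hyx
  · exact h
  · exact K.mem_of_lie_eq_two_smul (hpair y x hyx) h
      (lie_blade_append_singleton_blade_cons (X := [y]) (by simpa using hyx.symm) hx
        (List.singleton_disjoint.mpr hy) (Or.inl odd_one))

theorem blade_mem_of_length_eq {l l' : List (Fin n)} (hl : l.Nodup) (hl' : l'.Nodup)
    (hlen : l.length = l'.length) (h : blade n l ∈ K) : blade n l' ∈ K := by
  rw [blade_mem_iff_of_toFinset_eq K hl rfl] at h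
  rw [blade_mem_iff_of_toFinset_eq K hl' rfl]
  refine Finset.of_card_eq_of_exchange (P := fun s => blade n s.toList ∈ K) ?_ h
    (by rw [List.toFinset_card_of_nodup hl, List.toFinset_card_of_nodup hl', hlen])
  intro s x y hs hx hy
  have hnodup : ∀ z ∉ s.erase x, (z :: (s.erase x).toList).Nodup := fun z hz =>
    List.nodup_cons.mpr ⟨by simpa using hz, Finset.nodup_toList _⟩
  have hxt : x ∉ s.erase x := Finset.notMem_erase x s
  have hyt : y ∉ s.erase x := fun h => hy (Finset.mem_of_mem_erase h)
  rw [← blade_mem_iff_of_toFinset_eq K (hnodup x hxt) (by simp [Finset.insert_erase hx])] at hs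
  rw [← blade_mem_iff_of_toFinset_eq K (hnodup y hyt) (by simp)]
  exact blade_cons_mem_of_blade_cons_mem hpair (by simp) (by simpa using hyt) hs

end Subalgebra

section LieM

variable {n : ℕ} {hn : 3 ≤ n}

theorem blade_pair_mem_lieM_of_val_eq_succ {a b : Fin n} (h : b.val = a.val + 1) :
    blade n [a, b] ∈ lieM n hn := by
  obtain ⟨a, ha⟩ := a
  obtain ⟨b, hb⟩ := b
  subst h
  exact LieSubalgebra.subset_lieSpan (Or.inr ⟨a, hb, by simp⟩)

theorem blade_pair_mem_lieM_of_lt {a b : Fin n} (hab : a < b) : blade n [a, b] ∈ lieM n hn := by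
  obtain ⟨d, hd⟩ : ∃ d, b.val = a.val + d + 1 := ⟨b.val - a.val - 1, by omega⟩
  induction d generalizing b with
  | zero => exact blade_pair_mem_lieM_of_val_eq_succ hd
  | succ d ih =>
    let c : Fin n := ⟨a.val + d + 1, by omega⟩
    have hcb : b.val = c.val + 1 := by simp only [c]; omega
    have hac : a ≠ c := Fin.ne_of_val_ne (by simp only [c]; omega)
    exact (lieM n hn).mem_of_lie_eq_two_smul (ih (by simp [Fin.lt_def, c]) rfl)
      (blade_pair_mem_lieM_of_val_eq_succ hcb)
      (lie_blade_append_singleton_blade_cons (X := [a]) (T := [b]) (by simpa using hac.symm)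
        (by simpa using (Fin.ne_of_val_ne (by omega) : c ≠ b)) (by simpa using hab.ne')
        (Or.inl odd_one))

theorem blade_pair_mem_lieM {a b : Fin n} (hab : a ≠ b) : blade n [a, b] ∈ lieM n hn := by
  rcases hab.lt_or_gt with h | h
  · exact blade_pair_mem_lieM_of_lt h
  · have : blade n [a, b] = -blade n [b, a] := by
      simp [cliffordGen_mul_anticomm hab]
    rw [this, neg_mem_iff]
    exact blade_pair_mem_lieM_of_lt h

theorem blade_mem_lieM_of_length_eq_three {l : List (Fin n)} (hl : l.Nodup) (hlen : l.length = 3) :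
    blade n l ∈ lieM n hn := by
  have hgen : blade n [⟨0, by omega⟩, ⟨1, by omega⟩, ⟨2, by omega⟩] ∈ lieM n hn :=
    LieSubalgebra.subset_lieSpan (Or.inl (by simp [mul_assoc]))
  exact blade_mem_of_length_eq (fun _ _ => blade_pair_mem_lieM) (by simp [Fin.ext_iff]) hl
    (by rw [hlen]; rfl) hgen

theorem blade_mem_lieM {l : List (Fin n)} (hl : l.Nodup) (h2 : 2 ≤ l.length)
    (hmod : l.length % 4 = 2 ∨ l.length % 4 = 3 ∧ l.length < n) : blade n l ∈ lieM n hn := by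
  obtain ⟨k, hk⟩ : ∃ k, l.length = k := ⟨_, rfl⟩
  induction k using Nat.strong_induction_on generalizing l with
  | _ k ih =>
  have hk_le : k ≤ n := hk ▸ by simpa using hl.length_le_card
  rcases (by omega : k = 2 ∨ k = 3 ∨ 6 ≤ k ∧ k % 4 = 2 ∨ 7 ≤ k ∧ k % 4 = 3 ∧ k < n) with
    rfl | rfl | ⟨hk6, hk2⟩ | ⟨hk7, hk3, hkn⟩
  · obtain ⟨a, b, rfl⟩ := List.length_eq_two.mp hk
    exact blade_pair_mem_lieM (by simpa using hl)
  · exact blade_mem_lieM_of_length_eq_three hl hk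
  · rw [← List.take_append_drop 3 l] at hl ⊢
    obtain ⟨hl₁, hl₂, hdisj⟩ := List.nodup_append'.mp hl
    have hlen₁ : (l.take 3).length = 3 := by simp [hk]; omega
    have hlen₂ : (l.drop 3).length = k - 3 := by simp [hk]
    exact (lieM n hn).mem_of_lie_eq_two_smul (blade_mem_lieM_of_length_eq_three hl₁ hlen₁)
      (ih (k - 3) (by omega) hl₂ (by rw [hlen₂]; omega) (by rw [hlen₂]; omega) hlen₂)
      (lie_blade_of_disjoint_of_odd hdisj (by rw [hlen₁]; decide)
        (by rw [hlen₂, Nat.odd_iff]; omega))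
  · obtain ⟨d, -, hd⟩ := Finset.exists_mem_notMem_of_card_lt_card (s := l.toFinset)
      (t := Finset.univ) (by simpa using (List.toFinset_card_le l).trans_lt (hk ▸ hkn))
    rw [List.mem_toFinset] at hd
    obtain ⟨x, y, T, rfl⟩ : ∃ x y T, l = x :: y :: T := by
      rcases l with _ | ⟨x, _ | ⟨y, T⟩⟩ <;> simp at hk <;> first | omega | exact ⟨x, y, T, rfl⟩
    have hlenT : T.length = k - 2 := by simp at hk; omega
    refine blade_cons_cons_mem_of_triple_mem hl hd (by rw [hlenT, Nat.odd_iff]; omega)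
      (blade_mem_lieM_of_length_eq_three ?_ rfl)
      (ih (k - 1) (by omega) ?_ (by simp; omega) (by simp; omega) (by simp; omega))
    · simp only [List.nodup_cons, List.mem_cons, not_or] at hl hd ⊢
      tauto
    · exact List.nodup_cons.mpr ⟨fun h => hd (by simp [h]), hl.of_cons.of_cons⟩

end LieM

theorem lieM_contains_products (n : ℕ) (hn : 3 ≤ n) (k : ℕ) (hk2 : 2 ≤ k) (hkn : k ≤ n)
    (hkmod : k % 4 = 2 ∨ k % 4 = 3) (j : Fin k → Fin n) (hj : Function.Injective j) :
    (List.ofFn (fun t : Fin k => cliffordGen n (j t))).prod ∈ lieM n hn ∨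
      (k = n ∧ n % 4 = 3) := by
  by_cases hexc : k = n ∧ n % 4 = 3
  · exact Or.inr hexc
  · left
    have hprod :
        (List.ofFn (fun t : Fin k => cliffordGen n (j t))).prod = blade n (List.ofFn j) := by
      simp [blade, List.map_ofFn, Function.comp_def]
    rw [hprod]
    refine blade_mem_lieM (List.nodup_ofFn.mpr hj) (by simpa using hk2) ?_
    rw [List.length_ofFn]
    omega
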